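/- Let a ∈ ℝ, let φ : (a,∞) → ℝ be C¹ with φ'(t) > 0 for all t, and let u₀ ∈ (a,∞). Then Λ_{u₀} = ∫_{u₀}^{∞} dλ / √(e^{2(φ(λ) − φ(u₀))} − 1) is finite if and only if ∫_{u₀}^{∞} e^{−φ(λ)} dλ is finite. Consequently, if Λ_{λ₀} < ∞ for some λ₀ ∈ (a,∞), then Λ_{λ} < ∞ for every λ ∈ (a,∞). -/

import Mathlib

/-!
Near `u₀` the difference `φ(λ) - φ(u₀)` grows at least linearly, and `e^{2s} - 1 ≥ 2s`, so the
integrand of `Λ_{u₀}` has at worst an integrable singularity `≲ (λ - u₀)^{-1/2}`. Beyond any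
`b > u₀` we have `s := φ(λ) - φ(u₀) ≥ s₁ > 0`, and there
`e^{-s} ≤ (e^{2s} - 1)^{-1/2} ≤ (1 - e^{-2s₁})^{-1/2} e^{-s}`, so the tails of `Λ_{u₀}` and of
`∫ e^{-φ}` are finite together. Since `e^{-φ}` is bounded on bounded intervals, finiteness of
`∫_l^∞ e^{-φ}` does not depend on `l`.
-/

open Set Filter MeasureTheory
open scoped ENNReal

/-- The half-length `Λ_{u₀} = ∫_{u₀}^∞ dλ / √(e^{2(φ(λ)-φ(u₀))} - 1) ∈ (0,∞]`
of the maximal interval of existence of the grim reaper through `u₀`. -/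
noncomputable def Lam (φ : ℝ → ℝ) (u₀ : ℝ) : ℝ≥0∞ :=
  ∫⁻ t in Set.Ioi u₀, ENNReal.ofReal (1 / Real.sqrt (Real.exp (2 * (φ t - φ u₀)) - 1))

open Real Topology

lemma exp_neg_le_one_div_sqrt_exp_two_mul_sub_one {s : ℝ} (hs : 0 < s) :
    exp (-s) ≤ 1 / √(exp (2 * s) - 1) := by
  have hpos : 0 < exp (2 * s) - 1 := by
    have : 1 < exp (2 * s) := one_lt_exp_iff.2 (by linarith)
    linarith
  have hsqrt : √(exp (2 * s) - 1) ≤ exp s := by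
    rw [sqrt_le_left (exp_pos s).le, sq, ← exp_add, ← two_mul]
    linarith
  rw [exp_neg, ← one_div]
  exact one_div_le_one_div_of_le (sqrt_pos.2 hpos) hsqrt

lemma one_div_sqrt_exp_two_mul_sub_one_le {s s₁ : ℝ} (hs₁ : 0 < s₁) (hs : s₁ ≤ s) :
    1 / √(exp (2 * s) - 1) ≤ 1 / √(1 - exp (-(2 * s₁))) * exp (-s) := by
  have hd : 0 < 1 - exp (-(2 * s₁)) := sub_pos.2 (exp_lt_one_iff.2 (by linarith))
  have hkey : exp (2 * s) * (1 - exp (-(2 * s₁))) ≤ exp (2 * s) - 1 := by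
    have : 1 ≤ exp (2 * s) * exp (-(2 * s₁)) := by
      rw [← exp_add]
      exact one_le_exp (by linarith)
    linarith
  have hsqrt : exp s * √(1 - exp (-(2 * s₁))) ≤ √(exp (2 * s) - 1) := by
    calc exp s * √(1 - exp (-(2 * s₁)))
        = √(exp (2 * s) * (1 - exp (-(2 * s₁)))) := by
          rw [sqrt_mul (exp_pos _).le, ← sqrt_sq (exp_pos s).le, ← exp_nat_mul]
          norm_num
      _ ≤ √(exp (2 * s) - 1) := sqrt_le_sqrt hkey
  calc 1 / √(exp (2 * s) - 1) ≤ 1 / (exp s * √(1 - exp (-(2 * s₁)))) :=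
        one_div_le_one_div_of_le (by positivity) hsqrt
    _ = 1 / √(1 - exp (-(2 * s₁))) * exp (-s) := by
        rw [exp_neg s, ← one_div, one_div_mul_one_div, mul_comm]

lemma one_div_sqrt_exp_two_mul_sub_one_le_of_le {s c : ℝ} (hc : 0 < c) (hs : c ≤ s) :
    1 / √(exp (2 * s) - 1) ≤ 1 / √(2 * c) := by
  have : 2 * c ≤ exp (2 * s) - 1 := by linarith [add_one_le_exp (2 * s)]
  exact one_div_le_one_div_of_le (sqrt_pos.2 (by linarith)) (sqrt_le_sqrt this)

lemma lintegral_lt_top_iff_of_le_of_le {α : Type*} [MeasurableSpace α] {μ : Measure α}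
    {f g : α → ℝ≥0∞} {c C : ℝ≥0∞} (hc : c ≠ 0) (hC : C ≠ ⊤)
    (hlo : ∀ᵐ x ∂μ, c * g x ≤ f x) (hhi : ∀ᵐ x ∂μ, f x ≤ C * g x) :
    ∫⁻ x, f x ∂μ < ⊤ ↔ ∫⁻ x, g x ∂μ < ⊤ := by
  constructor
  · intro hf
    refine ENNReal.lt_top_of_mul_ne_top_right ?_ hc
    exact ((lintegral_const_mul_le c g).trans (lintegral_mono_ae hlo)).trans_lt hf |>.ne
  · intro hg
    calc ∫⁻ x, f x ∂μ ≤ ∫⁻ x, C * g x ∂μ := lintegral_mono_ae hhi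
      _ = C * ∫⁻ x, g x ∂μ := lintegral_const_mul' C g hC
      _ < ⊤ := ENNReal.mul_lt_top hC.lt_top hg

lemma setLIntegral_Ioi_lt_top_iff_of_Ioc {μ : Measure ℝ} {f : ℝ → ℝ≥0∞} {x y : ℝ}
    (hxy : x ≤ y) (h : ∫⁻ t in Ioc x y, f t ∂μ < ⊤) :
    ∫⁻ t in Ioi x, f t ∂μ < ⊤ ↔ ∫⁻ t in Ioi y, f t ∂μ < ⊤ := by
  rw [← Ioc_union_Ioi_eq_Ioi hxy, lintegral_union measurableSet_Ioi Ioc_disjoint_Ioi_same,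
    ENNReal.add_lt_top]
  exact and_iff_right h

lemma setLIntegral_Ioc_one_div_sqrt_exp_sub_one_lt_top {ψ : ℝ → ℝ} {x b m : ℝ} (hm : 0 < m)
    (hψ : ∀ t ∈ Ioc x b, m * (t - x) ≤ ψ t) :
    ∫⁻ t in Ioc x b, ENNReal.ofReal (1 / √(exp (2 * ψ t) - 1)) < ⊤ := by
  have hint : IntegrableOn (fun t ↦ 1 / √(2 * m) * (t - x) ^ (-(1 / 2) : ℝ)) (Ioc x b) := by
    have h := (intervalIntegral.intervalIntegrable_rpow' (a := 0) (b := b - x)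
      (r := -(1 / 2)) (by norm_num)).comp_sub_right x
    rw [zero_add, sub_add_cancel] at h
    exact h.1.const_mul _
  refine lt_of_le_of_lt (setLIntegral_mono' measurableSet_Ioc fun t ht ↦
    ENNReal.ofReal_le_ofReal ?_) hint.lintegral_lt_top
  have htx : 0 < t - x := sub_pos.2 ht.1
  calc 1 / √(exp (2 * ψ t) - 1) ≤ 1 / √(2 * (m * (t - x))) :=
        one_div_sqrt_exp_two_mul_sub_one_le_of_le (by positivity) (hψ t ht)
    _ = 1 / √(2 * m) * (t - x) ^ (-(1 / 2) : ℝ) := by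
        rw [← mul_assoc, sqrt_mul (by positivity), sqrt_eq_rpow (t - x), rpow_neg htx.le]
        ring

lemma lintegral_one_div_sqrt_exp_sub_one_lt_top_iff {α : Type*} [MeasurableSpace α]
    {μ : Measure α} {φ : α → ℝ} {k s₁ : ℝ} (hs₁ : 0 < s₁) (hφ : ∀ᵐ x ∂μ, s₁ ≤ φ x - k) :
    ∫⁻ x, ENNReal.ofReal (1 / √(exp (2 * (φ x - k)) - 1)) ∂μ < ⊤ ↔
      ∫⁻ x, ENNReal.ofReal (exp (-φ x)) ∂μ < ⊤ := by
  have hexp : ∀ x, exp k * exp (-φ x) = exp (-(φ x - k)) := fun x ↦ by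
    rw [← exp_add]; ring_nf
  refine lintegral_lt_top_iff_of_le_of_le (c := ENNReal.ofReal (exp k))
    (C := ENNReal.ofReal (1 / √(1 - exp (-(2 * s₁))) * exp k))
    (by simp [exp_pos]) ENNReal.ofReal_ne_top ?_ ?_
  · filter_upwards [hφ] with x hx
    rw [← ENNReal.ofReal_mul (exp_pos _).le, hexp]
    exact ENNReal.ofReal_le_ofReal
      (exp_neg_le_one_div_sqrt_exp_two_mul_sub_one (hs₁.trans_le hx))
  · filter_upwards [hφ] with x hx
    rw [← ENNReal.ofReal_mul (by positivity), mul_assoc, hexp]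
    exact ENNReal.ofReal_le_ofReal (one_div_sqrt_exp_two_mul_sub_one_le hs₁ hx)

lemma setLIntegral_Ioc_exp_neg_lt_top {f : ℝ → ℝ} {x y : ℝ} (hf : ∀ t ∈ Ioc x y, f x ≤ f t) :
    ∫⁻ t in Ioc x y, ENNReal.ofReal (exp (-f t)) < ⊤ :=
  setLIntegral_lt_top_of_le_nnreal (by simp) ⟨(exp (-f x)).toNNReal, fun t ht ↦
    ENNReal.ofReal_le_ofReal (exp_le_exp.2 (neg_le_neg (hf t ht)))⟩

lemma setLIntegral_Ioi_exp_neg_lt_top_iff {f : ℝ → ℝ} {a x y : ℝ} (hf : MonotoneOn f (Ioi a))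
    (hx : x ∈ Ioi a) (hxy : x ≤ y) :
    ∫⁻ t in Ioi x, ENNReal.ofReal (exp (-f t)) < ⊤ ↔
      ∫⁻ t in Ioi y, ENNReal.ofReal (exp (-f t)) < ⊤ :=
  setLIntegral_Ioi_lt_top_iff_of_Ioc hxy <|
    setLIntegral_Ioc_exp_neg_lt_top fun _ ht ↦ hf hx (mem_Ioi.2 (hx.trans ht.1)) ht.1.le

lemma strictMonoOn_Ioi_of_hasDerivAt_pos {f f' : ℝ → ℝ} {a : ℝ}
    (hf : ∀ t ∈ Ioi a, HasDerivAt f (f' t) t) (hf' : ∀ t ∈ Ioi a, 0 < f' t) :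
    StrictMonoOn f (Ioi a) :=
  strictMonoOn_of_hasDerivWithinAt_pos (convex_Ioi a)
    (fun t ht ↦ (hf t ht).continuousAt.continuousWithinAt)
    (fun t ht ↦ (hf t (interior_subset ht)).hasDerivWithinAt)
    (fun t ht ↦ hf' t (interior_subset ht))

lemma eventually_mul_sub_le_sub_of_hasDerivAt {f : ℝ → ℝ} {f' x m : ℝ} (hf : HasDerivAt f f' x)
    (hm : m < f') : ∀ᶠ t in 𝓝[>] x, m * (t - x) ≤ f t - f x := by
  have hslope := (hasDerivAt_iff_tendsto_slope.1 hf).mono_left (nhdsGT_le_nhdsNE x)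
  filter_upwards [hslope.eventually_const_lt hm, self_mem_nhdsWithin] with t ht htx
  rw [slope_def_field, lt_div_iff₀ (sub_pos.2 htx)] at ht
  exact ht.le

theorem lam_lt_top_iff {a u₀ : ℝ} {φ φ' : ℝ → ℝ} (hφ : ∀ t ∈ Ioi a, HasDerivAt φ (φ' t) t)
    (hφ'pos : ∀ t ∈ Ioi a, 0 < φ' t) (hu₀ : u₀ ∈ Ioi a) :
    Lam φ u₀ < ⊤ ↔ ∫⁻ t in Ioi u₀, ENNReal.ofReal (exp (-φ t)) < ⊤ := by
  have hmono := strictMonoOn_Ioi_of_hasDerivAt_pos hφ hφ'pos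
  obtain ⟨b, hb, hlin⟩ := mem_nhdsGT_iff_exists_Ioc_subset.1 <|
    eventually_mul_sub_le_sub_of_hasDerivAt (hφ u₀ hu₀) (half_lt_self (hφ'pos u₀ hu₀))
  have hbA : b ∈ Ioi a := mem_Ioi.2 (hu₀.trans hb)
  have hsing := setLIntegral_Ioc_one_div_sqrt_exp_sub_one_lt_top (ψ := fun t ↦ φ t - φ u₀)
    (half_pos (hφ'pos u₀ hu₀)) fun t ht ↦ hlin ht
  have htail : ∀ᵐ t ∂volume.restrict (Ioi b), φ b - φ u₀ ≤ φ t - φ u₀ :=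
    ae_restrict_of_forall_mem measurableSet_Ioi fun t ht ↦
      sub_le_sub_right (hmono hbA (mem_Ioi.2 (hbA.trans ht)) ht).le _
  rw [Lam, setLIntegral_Ioi_lt_top_iff_of_Ioc hb.le hsing,
    lintegral_one_div_sqrt_exp_sub_one_lt_top_iff (sub_pos.2 (hmono hu₀ hbA hb)) htail,
    setLIntegral_Ioi_exp_neg_lt_top_iff hmono.monotoneOn hu₀ hb.le]

theorem stmt_2 (a : ℝ) (φ φ' : ℝ → ℝ)
    (hφ : ∀ t ∈ Ioi a, HasDerivAt φ (φ' t) t)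
    (hφ'pos : ∀ t ∈ Ioi a, 0 < φ' t) :
    (∀ u₀ ∈ Ioi a,
      (Lam φ u₀ < ⊤ ↔ ∫⁻ t in Ioi u₀, ENNReal.ofReal (Real.exp (-φ t)) < ⊤)) ∧
    ((∃ l₀ ∈ Ioi a, Lam φ l₀ < ⊤) → ∀ l ∈ Ioi a, Lam φ l < ⊤) := by
  have key : ∀ u₀ ∈ Ioi a, Lam φ u₀ < ⊤ ↔ ∫⁻ t in Ioi u₀, ENNReal.ofReal (exp (-φ t)) < ⊤ :=
    fun u₀ hu₀ ↦ lam_lt_top_iff hφ hφ'pos hu₀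
  refine ⟨key, ?_⟩
  rintro ⟨l₀, hl₀, hfin⟩ l hl
  have hmono := (strictMonoOn_Ioi_of_hasDerivAt_pos hφ hφ'pos).monotoneOn
  rw [key l hl]
  rcases le_total l l₀ with h | h
  · exact (setLIntegral_Ioi_exp_neg_lt_top_iff hmono hl h).2 ((key l₀ hl₀).1 hfin)
  · exact (setLIntegral_Ioi_exp_neg_lt_top_iff hmono hl₀ h).1 ((key l₀ hl₀).1 hfin)
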